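/- arXiv:2105.05971 — 3 statements merged into one kernel-verified Lean document; each statement's English description precedes it below -/
import Mathlib

section
/- Let C be an n×n real matrix of determinant 1 such that the n² entries of C⁻¹ are linearly independent over Q. Then the set {CB − (CB)^t : B ∈ M_n(Z)} is dense in the space of real skew-symmetric n×n matrices. -/
/-! Let `H` be the closure of `ℝ C⁻¹ + M_n(ℤ)` and `V` the largest subspace contained in `H`.
A closed subgroup of `ℝᵈ` containing no line is discrete (normalise small elements and extract a
limit direction), so `H` meets a complement `U` of `V` in a discrete group. Projecting the unit
matrices `E_ij` to `U` along `V` gives elements `g_ij` of that discrete group with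
`∑ (C⁻¹)_ij g_ij = 0`, since `C⁻¹ ∈ V`. A `ℤ`-basis of a discrete group is `ℝ`-linearly
independent, so expanding the `g_ij` in it and using the `ℚ`-independence of the entries of `C⁻¹`
gives `g_ij = 0`. Hence `V` is everything and `H` is the whole space. Finally
`X ↦ CX − (CX)ᵀ` is continuous, maps `ℝ C⁻¹ + M_n(ℤ)` into the set in question (the line goes
to `0`), and sends `C⁻¹ D / 2` to `D`. -/

open Filter Topology Set Submodule Matrix

namespace AddSubgroup

section Lineality

variable {E : Type*} [AddCommGroup E] [Module ℝ E]

/-- The lineality space of `H`: the largest `ℝ`-subspace contained in `H`. -/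
def lineality (H : AddSubgroup E) : Submodule ℝ E where
  carrier := {x | ∀ t : ℝ, t • x ∈ H}
  add_mem' hx hy t := by rw [smul_add]; exact H.add_mem (hx t) (hy t)
  zero_mem' t := by rw [smul_zero]; exact H.zero_mem
  smul_mem' c _ hx t := by rw [smul_smul]; exact hx (t * c)

theorem lineality_subset (H : AddSubgroup E) : (H.lineality : Set E) ⊆ H :=
  fun x hx => by simpa using hx 1

end Lineality

variable {E : Type*} [NormedAddCommGroup E] [NormedSpace ℝ E]

/-- Rescaling the shrinking elements `a k` by integers approximates every multiple of their
limiting direction. -/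
theorem mem_lineality_of_tendsto {H : AddSubgroup E} (hH : IsClosed (H : Set E)) {a : ℕ → E}
    {w : E} (haH : ∀ k, a k ∈ H) (ha : ∀ k, a k ≠ 0)
    (ha_norm : Tendsto (fun k => ‖a k‖) atTop (𝓝 0))
    (hw : Tendsto (fun k => ‖a k‖⁻¹ • a k) atTop (𝓝 w)) : w ∈ H.lineality := by
  intro t
  have hcoef : Tendsto (fun k => (⌊t / ‖a k‖⌋ : ℝ) * ‖a k‖) atTop (𝓝 t) := by
    have hclose : ∀ k, ‖(⌊t / ‖a k‖⌋ : ℝ) * ‖a k‖ - t‖ ≤ ‖a k‖ := fun k => by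
      have hk := norm_pos_iff.2 (ha k)
      rw [Real.norm_eq_abs, abs_sub_comm, abs_of_nonneg (Int.sub_floor_div_mul_nonneg t hk)]
      exact (Int.sub_floor_div_mul_lt t hk).le
    simpa using (squeeze_zero_norm hclose ha_norm).add_const t
  refine hH.mem_of_tendsto (hcoef.smul hw) (Eventually.of_forall fun k => ?_)
  have hk : ((⌊t / ‖a k‖⌋ : ℝ) * ‖a k‖) • (‖a k‖⁻¹ • a k) = ⌊t / ‖a k‖⌋ • a k := by
    rw [smul_smul, mul_assoc, mul_inv_cancel₀ (norm_ne_zero_iff.2 (ha k)), mul_one,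
      Int.cast_smul_eq_zsmul]
  rw [SetLike.mem_coe, hk]
  exact H.zsmul_mem (haH k) _

theorem discreteTopology_of_lineality_eq_bot [FiniteDimensional ℝ E] {H : AddSubgroup E}
    (hH : IsClosed (H : Set E)) (h : H.lineality = ⊥) : DiscreteTopology H := by
  refine discreteTopology_of_isOpen_singleton_zero (Metric.isOpen_singleton_iff.2 ?_)
  by_contra! hsmall
  choose a ha_dist ha_ne using fun k : ℕ => hsmall (1 / (k + 1)) Nat.one_div_pos_of_nat
  have ha_ne' : ∀ k, (a k : E) ≠ 0 := fun k => by simpa using ha_ne k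
  have ha_norm : Tendsto (fun k => ‖(a k : E)‖) atTop (𝓝 0) :=
    squeeze_zero (fun _ => norm_nonneg _) (fun k => by simpa using (ha_dist k).le)
      tendsto_one_div_add_atTop_nhds_zero_nat
  obtain ⟨w, hw, φ, hφ, hlim⟩ := (isCompact_sphere (0 : E) 1).tendsto_subseq
    (x := fun k => ‖(a k : E)‖⁻¹ • (a k : E))
    (fun k => by simp [norm_smul, inv_mul_cancel₀ (norm_ne_zero_iff.2 (ha_ne' k))])
  have hw0 := mem_lineality_of_tendsto hH (fun k => (a (φ k)).2) (fun k => ha_ne' (φ k))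
    (ha_norm.comp hφ.tendsto_atTop) hlim
  rw [h, Submodule.mem_bot] at hw0
  simp [hw0] at hw

end AddSubgroup

section DiscreteSubgroup

variable {E : Type*} [NormedAddCommGroup E] [NormedSpace ℝ E] [FiniteDimensional ℝ E]
  {L : Submodule ℤ E} [DiscreteTopology L] {ι : Type*} [Fintype ι]

theorem Module.Basis.linearIndependent_real_of_discrete (b : Module.Basis ι ℤ L) :
    LinearIndependent ℝ (fun i => (b i : E)) := by
  have hspan : span ℤ (range fun i => (b i : E)) = L := by
    rw [show (range fun i => (b i : E)) = L.subtype '' range b from range_comp _ _, span_image,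
      b.span_eq, map_subtype_top]
  have hdisc : DiscreteTopology (span ℤ (range fun i => (b i : E))) := by
    rw [hspan]; infer_instance
  rw [linearIndependent_iff_card_eq_finrank_span, Real.finrank_eq_int_finrank_of_discrete hdisc,
    Set.finrank, hspan, Module.finrank_eq_card_basis b]

theorem LinearIndependent.eq_zero_of_sum_smul_mem_discrete {v : ι → ℝ}
    (hv : LinearIndependent ℚ v) {g : ι → E} (hg : ∀ i, g i ∈ L) (hsum : ∑ i, v i • g i = 0)
    (i : ι) : g i = 0 := by
  let b := Module.Free.chooseBasis ℤ L
  let c : ι → Module.Free.ChooseBasisIndex ℤ L → ℤ := fun i => b.repr ⟨g i, hg i⟩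
  have hg_eq : ∀ i, g i = ∑ j, (c i j : ℝ) • (b j : E) := fun i => by
    have := congrArg Subtype.val (b.sum_repr ⟨g i, hg i⟩).symm
    simpa only [c, Int.cast_smul_eq_zsmul, coe_sum, SetLike.val_smul] using this
  have hcol : ∀ j, ∑ i, v i * c i j = 0 := by
    refine Fintype.linearIndependent_iff.1 b.linearIndependent_real_of_discrete _ ?_
    calc ∑ j, (∑ i, v i * c i j) • (b j : E) = ∑ i, v i • g i := by
          simp_rw [hg_eq, Finset.smul_sum, smul_smul, Finset.sum_smul]
          exact Finset.sum_comm
      _ = 0 := hsum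
  have hc : ∀ j, c i j = 0 := fun j => by
    have := Fintype.linearIndependent_iff.1 hv (fun i => (c i j : ℚ))
      (by simpa [Rat.smul_def, mul_comm] using hcol j) i
    exact_mod_cast this
  simp [hg_eq i, hc]

end DiscreteSubgroup

section Kronecker

variable {E : Type*} [NormedAddCommGroup E] [NormedSpace ℝ E] [FiniteDimensional ℝ E]
  {ι : Type*} [Fintype ι]

theorem dense_span_singleton_sup_span_int (b : Module.Basis ι ℝ E) {v : E}
    (hv : LinearIndependent ℚ (b.repr v)) :
    Dense (((ℝ ∙ v).toAddSubgroup ⊔ (span ℤ (range b)).toAddSubgroup : AddSubgroup E) :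
      Set E) := by
  let G := (ℝ ∙ v).toAddSubgroup ⊔ (span ℤ (range b)).toAddSubgroup
  let H := G.topologicalClosure
  have hGH : G ≤ H := G.le_topologicalClosure
  suffices hV : H.lineality = ⊤ by
    rw [dense_iff_closure_eq, ← AddSubgroup.topologicalClosure_coe, eq_univ_iff_forall]
    exact fun x => H.lineality_subset (hV ▸ Submodule.mem_top)
  have hvV : v ∈ H.lineality := fun t =>
    hGH (AddSubgroup.mem_sup_left (mem_span_singleton.2 ⟨t, rfl⟩))
  have hbH : ∀ i, b i ∈ H := fun i =>
    hGH (AddSubgroup.mem_sup_right (subset_span (mem_range_self i)))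
  obtain ⟨U, hUV⟩ := H.lineality.exists_isCompl
  let P := U.projection H.lineality hUV.symm
  have hPH : ∀ x ∈ H, P x ∈ H := fun x hx => by
    simpa using H.sub_mem hx (H.lineality_subset (sub_projection_mem hUV.symm x))
  have hPv : P v = 0 := (projection_apply_eq_zero_iff _).2 hvV
  have hdisc : DiscreteTopology (H ⊓ U.toAddSubgroup).toIntSubmodule := by
    refine AddSubgroup.discreteTopology_of_lineality_eq_bot (H := H ⊓ U.toAddSubgroup)
      (G.isClosed_topologicalClosure.inter U.closed_of_finiteDimensional) ?_
    refine (Submodule.eq_bot_iff _).2 fun x hx => hUV.disjoint.le_bot ⟨?_, ?_⟩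
    · exact fun t => (hx t).1
    · simpa using (hx 1).2
  have hPb : ∀ i, P (b i) = 0 :=
    hv.eq_zero_of_sum_smul_mem_discrete (L := (H ⊓ U.toAddSubgroup).toIntSubmodule)
      (fun i => ⟨hPH _ (hbH i), projection_apply_mem _ _⟩)
      (by simp only [← map_smul, ← map_sum, b.sum_repr, hPv])
  rw [eq_top_iff, ← b.span_eq, span_le]
  rintro _ ⟨i, rfl⟩
  exact (projection_apply_eq_zero_iff _).1 (hPb i)

end Kronecker

theorem Matrix.exists_map_intCast_eq_of_mem_span_stdBasis {m n : Type*} [Fintype m] [Fintype n]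
    {Z : Matrix m n ℝ} (hZ : Z ∈ span ℤ (range (stdBasis ℝ m n))) :
    ∃ B : Matrix m n ℤ, B.map (Int.cast : ℤ → ℝ) = Z := by
  choose B hB using ((stdBasis ℝ m n).mem_span_iff_repr_mem ℤ Z).1 hZ
  refine ⟨Matrix.of fun i j => B (i, j), Matrix.ext fun i j => ?_⟩
  simpa [stdBasis] using hB (i, j)

attribute [local instance] Matrix.normedAddCommGroup Matrix.normedSpace

/-- Let `C` be an `n×n` real matrix of determinant `1` whose inverse has
entries linearly independent over `ℚ`. Then `{CB − (CB)ᵀ : B ∈ M_n(ℤ)}` is dense in the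
space of real skew-symmetric `n×n` matrices. -/
theorem dense_skew_parts_of_integer_multiples
    {n : ℕ} (C : Matrix (Fin n) (Fin n) ℝ) (hdet : C.det = 1)
    (hC : LinearIndependent ℚ (fun p : Fin n × Fin n => C⁻¹ p.1 p.2)) :
    ∀ D : Matrix (Fin n) (Fin n) ℝ, Dᵀ = -D →
      D ∈ closure { X : Matrix (Fin n) (Fin n) ℝ |
        ∃ B : Matrix (Fin n) (Fin n) ℤ,
          X = C * B.map (Int.cast : ℤ → ℝ) - (C * B.map (Int.cast : ℤ → ℝ))ᵀ } := by
  intro D hD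
  have hCinv : C * C⁻¹ = 1 := mul_nonsing_inv C (by simp [hdet])
  let G : AddSubgroup (Matrix (Fin n) (Fin n) ℝ) :=
    (ℝ ∙ C⁻¹).toAddSubgroup ⊔ (span ℤ (range (stdBasis ℝ (Fin n) (Fin n)))).toAddSubgroup
  have hG : Dense (G : Set (Matrix (Fin n) (Fin n) ℝ)) :=
    dense_span_singleton_sup_span_int _ (by convert hC; simp [stdBasis])
  let skewPart : Matrix (Fin n) (Fin n) ℝ → Matrix (Fin n) (Fin n) ℝ := fun X => C * X - (C * X)ᵀ
  have hcont : Continuous skewPart :=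
    (continuous_const.matrix_mul continuous_id).sub
      (continuous_const.matrix_mul continuous_id).matrix_transpose
  have hD : skewPart (C⁻¹ * ((1 / 2 : ℝ) • D)) = D := by
    simp only [skewPart, ← Matrix.mul_assoc, hCinv, Matrix.one_mul, transpose_smul, hD]
    module
  refine closure_mono ?_
    (image_closure_subset_closure_image hcont ⟨_, hG.closure_eq ▸ mem_univ _, hD⟩)
  rintro _ ⟨X, hX, rfl⟩
  obtain ⟨_, hY, Z, hZ, rfl⟩ := AddSubgroup.mem_sup.1 hX
  obtain ⟨t, rfl⟩ := mem_span_singleton.1 hY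
  obtain ⟨B, rfl⟩ := exists_map_intCast_eq_of_mem_span_stdBasis hZ
  refine ⟨B, ?_⟩
  simp only [skewPart, Matrix.mul_add, Matrix.mul_smul, hCinv, transpose_add, transpose_smul,
    transpose_one]
  abel
end

section
/- The set of matrices C ∈ SL(n,R) such that the entries of C⁻¹ are linearly independent over Q is dense in SL(n,R). -/
/-!
A matrix has `ℚ`-linearly independent entries iff none of the countably many forms
`A ↦ ∑ q_p A_p`, `q ∈ ℚ^{n×n} \ 0`, vanishes on it. A nonzero linear form `f` has dense
non-vanishing set in `SL(n, ℝ)`: along `t ↦ (1 + t E_ij) B` it changes by `t f(E_ij B)`, and since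
`B` is invertible some `f(E_ij B)` is nonzero; if only diagonal ones are, `f(B) = ∑ f(E_kk B) = 0`
yields a second index, and a first transvection `1 + s E_ij` turns `f(E_jj B)` into the
off-diagonal coefficient `s f(E_jj B)`. Baire's theorem in the closed set `SL(n, ℝ)` then gives
density of the intersection, and inversion, which is the adjugate on `SL(n, ℝ)`, is continuous.
-/

open Matrix Filter Topology Set

theorem IsClosed.subset_closure_inter_iInter_of_isOpen {X ι : Type*} [TopologicalSpace X]
    [T2Space X] [LocallyCompactSpace X] [Countable ι] {S : Set X} (hS : IsClosed S)
    {U : ι → Set X} (hU : ∀ i, IsOpen (U i)) (hdense : ∀ i, S ⊆ closure (S ∩ U i)) :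
    S ⊆ closure (S ∩ ⋂ i, U i) := by
  have : LocallyCompactSpace S := hS.locallyCompactSpace
  have hdense' : Dense (⋂ i, ((↑) : S → X) ⁻¹' U i) :=
    dense_iInter_of_isOpen (fun i => (hU i).preimage continuous_subtype_val)
      fun i => Subtype.dense_iff.2 <| by rw [Subtype.image_preimage_coe]; exact hdense i
  rwa [Subtype.dense_iff, ← preimage_iInter, Subtype.image_preimage_coe] at hdense'

namespace Matrix

variable {m : Type*} [Fintype m]

def entryForm (c : m × m → ℝ) : Matrix m m ℝ →ₗ[ℝ] ℝ :=
  ∑ p, c p • entryLinearMap ℝ ℝ p.1 p.2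

@[simp]
theorem entryForm_apply (c : m × m → ℝ) (A : Matrix m m ℝ) :
    entryForm c A = ∑ p, c p * A p.1 p.2 := by
  simp [entryForm]

variable [DecidableEq m]

theorem entryForm_ne_zero {c : m × m → ℝ} (hc : c ≠ 0) : entryForm c ≠ 0 := by
  obtain ⟨p, hp⟩ := Function.ne_iff.1 hc
  intro h
  apply hp
  simpa [single_apply, ← Prod.ext_iff] using LinearMap.congr_fun h (single p.1 p.2 1)

theorem inv_eq_adjugate_of_det_eq_one {A : Matrix m m ℝ} (hA : A.det = 1) :
    A⁻¹ = A.adjugate := by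
  rw [inv_def, hA, Ring.inverse_one, one_smul]

theorem transvection_mul_eq_add (i j : m) (t : ℝ) (B : Matrix m m ℝ) :
    transvection i j t * B = B + t • (single i j 1 * B) := by
  rw [transvection, add_mul, one_mul, ← smul_mul, smul_single, smul_eq_mul, mul_one]

theorem tendsto_transvection_mul_nhdsNE (i j : m) (B : Matrix m m ℝ) :
    Tendsto (fun t => transvection i j t * B) (𝓝[≠] 0) (𝓝 B) := by
  have hcont : Continuous fun t : ℝ => transvection i j t * B := by
    simp only [transvection_mul_eq_add]
    fun_prop
  simpa using (hcont.tendsto 0).mono_left nhdsWithin_le_nhds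

theorem exists_apply_single_mul_ne_zero {f : Matrix m m ℝ →ₗ[ℝ] ℝ} (hf : f ≠ 0)
    {B : Matrix m m ℝ} (hB : IsUnit B.det) : ∃ i j, f (single i j 1 * B) ≠ 0 := by
  by_contra! h
  have hfB : f ∘ₗ LinearMap.mulRight ℝ B = 0 := by
    refine ext_linearMap (R := ℝ) fun i j => LinearMap.ext_ring ?_
    simpa using h i j
  refine hf (LinearMap.ext fun X => ?_)
  simpa [nonsing_inv_mul_cancel_right _ _ hB] using LinearMap.congr_fun hfB (X * B⁻¹)

theorem apply_eq_sum_apply_single_mul (f : Matrix m m ℝ →ₗ[ℝ] ℝ) (B : Matrix m m ℝ) :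
    f B = ∑ k, f (single k k 1 * B) := by
  rw [← map_sum, ← Finset.sum_mul, sum_single_one, one_mul]

section DetOne

variable (f : Matrix m m ℝ →ₗ[ℝ] ℝ) {B : Matrix m m ℝ}

theorem mem_closure_det_eq_one_apply_ne_zero_of_single_mul (hB : B.det = 1) {i j : m}
    (hij : i ≠ j) (h : f (single i j 1 * B) ≠ 0) :
    B ∈ closure {A | A.det = 1 ∧ f A ≠ 0} := by
  by_cases hfB : f B = 0
  · refine mem_closure_of_tendsto (tendsto_transvection_mul_nhdsNE i j B)
      (eventually_mem_nhdsWithin.mono fun t ht => ⟨?_, ?_⟩)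
    · rw [det_mul, det_transvection_of_ne i j hij, hB, one_mul]
    · rw [transvection_mul_eq_add, map_add, map_smul, hfB, zero_add, smul_eq_mul]
      exact mul_ne_zero ht h
  · exact subset_closure ⟨hB, hfB⟩

theorem mem_closure_det_eq_one_apply_ne_zero_of_single_diag_mul (hB : B.det = 1) {i j : m}
    (hij : i ≠ j) (h : f (single j j 1 * B) ≠ 0) :
    B ∈ closure {A | A.det = 1 ∧ f A ≠ 0} := by
  by_cases hji : f (single j i 1 * B) = 0
  · rw [← closure_closure]
    refine mem_closure_of_tendsto (tendsto_transvection_mul_nhdsNE i j B)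
      (eventually_mem_nhdsWithin.mono fun s hs => ?_)
    refine mem_closure_det_eq_one_apply_ne_zero_of_single_mul f
      (by rw [det_mul, det_transvection_of_ne i j hij, hB, one_mul]) hij.symm ?_
    rw [transvection_mul_eq_add, mul_add, mul_smul_comm, ← Matrix.mul_assoc,
      single_mul_single_same, one_mul, map_add, map_smul, hji, zero_add, smul_eq_mul]
    exact mul_ne_zero hs h
  · exact mem_closure_det_eq_one_apply_ne_zero_of_single_mul f hB hij.symm hji

theorem setOf_det_eq_one_subset_closure_apply_ne_zero (hf : f ≠ 0) :
    {A : Matrix m m ℝ | A.det = 1} ⊆ closure {A | A.det = 1 ∧ f A ≠ 0} := by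
  intro B (hB : B.det = 1)
  by_cases hfB : f B = 0
  swap
  · exact subset_closure ⟨hB, hfB⟩
  obtain ⟨i, j, hij⟩ := exists_apply_single_mul_ne_zero hf (hB ▸ isUnit_one)
  obtain hne | rfl := ne_or_eq i j
  · exact mem_closure_det_eq_one_apply_ne_zero_of_single_mul f hB hne hij
  obtain ⟨k, hk⟩ : ∃ k, k ≠ i := by
    by_contra! hall
    rw [apply_eq_sum_apply_single_mul, Fintype.sum_eq_single i fun k hk => (hk (hall k)).elim]
      at hfB
    exact hij hfB
  exact mem_closure_det_eq_one_apply_ne_zero_of_single_diag_mul f hB hk hij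

end DetOne

theorem setOf_det_eq_one_subset_closure_linearIndependent :
    {A : Matrix m m ℝ | A.det = 1} ⊆
      closure {A | A.det = 1 ∧ LinearIndependent ℚ fun p : m × m => A p.1 p.2} := by
  have : LocallyCompactSpace (Matrix m m ℝ) := inferInstanceAs (LocallyCompactSpace (m → m → ℝ))
  let U (q : {q : m × m → ℚ // q ≠ 0}) : Set (Matrix m m ℝ) :=
    {A | entryForm (fun p => (q.1 p : ℝ)) A ≠ 0}
  have hLI : {A : Matrix m m ℝ | A.det = 1} ∩ ⋂ q, U q ⊆
      {A | A.det = 1 ∧ LinearIndependent ℚ fun p : m × m => A p.1 p.2} := by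
    refine fun A ⟨hA, hU⟩ => ⟨hA, Fintype.linearIndependent_iff.2 fun q hq => ?_⟩
    by_contra! hne
    exact mem_iInter.1 hU ⟨q, Function.ne_iff.2 hne⟩ (by simpa [Rat.smul_def] using hq)
  have hSL : IsClosed {A : Matrix m m ℝ | A.det = 1} :=
    isClosed_eq continuous_id.matrix_det continuous_const
  refine (hSL.subset_closure_inter_iInter_of_isOpen
    (fun q => isOpen_ne_fun (LinearMap.continuous_of_finiteDimensional _) continuous_const)
    fun q => setOf_det_eq_one_subset_closure_apply_ne_zero _ (entryForm_ne_zero ?_)).trans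
    (closure_mono hLI)
  simpa [funext_iff] using q.2

end Matrix

/-- The set of `C ∈ SL(n,ℝ)` whose inverse has entries linearly
independent over `ℚ` is dense in `SL(n,ℝ)` (i.e. in `{C : det C = 1}` with the standard
topology on matrices). -/
theorem dense_irrational_inverse_in_SL
    {n : ℕ} (C : Matrix (Fin n) (Fin n) ℝ) (hdet : C.det = 1) :
    C ∈ closure { C' : Matrix (Fin n) (Fin n) ℝ |
      C'.det = 1 ∧ LinearIndependent ℚ (fun p : Fin n × Fin n => C'⁻¹ p.1 p.2) } := by
  have hCinv : C⁻¹.det = 1 := by rw [det_nonsing_inv, hdet, Ring.inverse_one]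
  have hC : C⁻¹.adjugate = C := by
    rw [← inv_eq_adjugate_of_det_eq_one hCinv, nonsing_inv_nonsing_inv _ (hdet ▸ isUnit_one)]
  have hmaps : MapsTo adjugate
      {A : Matrix (Fin n) (Fin n) ℝ | A.det = 1 ∧ LinearIndependent ℚ fun p : Fin n × Fin n =>
        A p.1 p.2}
      {C' | C'.det = 1 ∧ LinearIndependent ℚ fun p : Fin n × Fin n => C'⁻¹ p.1 p.2} := by
    rintro A ⟨hA, hli⟩
    refine ⟨by rw [det_adjugate, hA, one_pow], ?_⟩
    rwa [← inv_eq_adjugate_of_det_eq_one hA, nonsing_inv_nonsing_inv _ (hA ▸ isUnit_one)]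
  exact hC ▸ map_mem_closure continuous_id.matrix_adjugate
    (setOf_det_eq_one_subset_closure_linearIndependent hCinv) hmaps
end

section
/- Let l, l' be the coordinate n-planes spanned by the first n and last n standard basis vectors of R^{2n} respectively. The union of the orbits, under the group G_Λ of integer matrices of the block form (I B; 0 A) with A ∈ SL(n,Z), B ∈ M_n(Z) (acting by ω ↦ g^t ω g on bilinear forms), of the antisymmetric forms with matrix (0 −C^t; C 0) for C ∈ SL(n,R), is dense in the set of antisymmetric forms with matrix (0 −C^t; C D) where C ∈ SL(n,R) and D is skew-symmetric. -/
/-!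
Congruence by the shear `(1 B; 0 1)` takes `(0 -C'ᵀ; C' 0)` to `(0 -C'ᵀ; C' C'B - (C'B)ᵀ)`, so it
suffices to find `C' → C` with `det C' = 1` and integer matrices `B` with `C'B - (C'B)ᵀ = D`.
Take for `B` the integer matrix nearest to `N C⁻¹` and `C' = M B⁻¹`, where
`M = N • (1 + D / (2N))` with its `(i, i)` entry corrected so that `det M = det B`. Then `C'B = M`
has skew part `D`, and since `M / N → 1` and `B / N → C⁻¹`, `C' → C` as `N → ∞`.
-/

open Matrix Filter Topology

section

variable {ι R : Type*} [Fintype ι] [DecidableEq ι] [CommRing R]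

theorem transpose_shear_mul_fromBlocks_mul_shear (C B : Matrix ι ι R) :
    (fromBlocks 1 B 0 1)ᵀ * fromBlocks 0 (-Cᵀ) C 0 * fromBlocks 1 B 0 1 =
      fromBlocks 0 (-Cᵀ) C (C * B - (C * B)ᵀ) := by
  simp [fromBlocks_transpose, fromBlocks_multiply, sub_eq_add_neg]

theorem det_add_smul_single (K : Matrix ι ι R) (i : ι) (t : R) :
    (K + t • single i i 1).det = K.det + t * K.adjugate i i := by
  have hrow : K + t • single i i 1 = K.updateRow i (K i + t • Pi.single i 1) := by
    ext k l
    by_cases hk : k = i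
    · subst hk; simp [single_apply, Pi.single_apply, eq_comm]
    · simp [updateRow_apply, hk, Ne.symm hk]
  rw [hrow, det_updateRow_add, det_updateRow_smul, updateRow_eq_self, adjugate_apply]

end

namespace Matrix

variable {ι 𝕜 : Type*} [Fintype ι] [DecidableEq ι] [Field 𝕜]

/-- The determinant is affine in the `(i, i)` entry, with slope the cofactor `K.adjugate i i`;
this moves that entry so that the determinant becomes `β` (when the cofactor is nonzero). -/
def adjustDiagEntry (K : Matrix ι ι 𝕜) (i : ι) (β : 𝕜) : Matrix ι ι 𝕜 :=
  K + ((β - K.det) / K.adjugate i i) • single i i 1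

theorem det_adjustDiagEntry {K : Matrix ι ι 𝕜} {i : ι} (hK : K.adjugate i i ≠ 0) (β : 𝕜) :
    (K.adjustDiagEntry i β).det = β := by
  rw [adjustDiagEntry, det_add_smul_single, div_mul_cancel₀ _ hK, add_sub_cancel]

theorem adjustDiagEntry_sub_transpose (K : Matrix ι ι 𝕜) (i : ι) (β : 𝕜) :
    K.adjustDiagEntry i β - (K.adjustDiagEntry i β)ᵀ = K - Kᵀ := by
  simp only [adjustDiagEntry, transpose_add, transpose_smul, transpose_single]
  abel

theorem adjustDiagEntry_det_self (K : Matrix ι ι 𝕜) (i : ι) : K.adjustDiagEntry i K.det = K := by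
  simp [adjustDiagEntry]

theorem _root_.Filter.Tendsto.matrix_adjustDiagEntry [TopologicalSpace 𝕜]
    [IsTopologicalDivisionRing 𝕜] {α : Type*} {l : Filter α} {K : α → Matrix ι ι 𝕜}
    {β : α → 𝕜} {K₀ : Matrix ι ι 𝕜} {β₀ : 𝕜} (hK : Tendsto K l (𝓝 K₀))
    (hβ : Tendsto β l (𝓝 β₀)) (i : ι) (hK₀ : K₀.adjugate i i ≠ 0) :
    Tendsto (fun a => (K a).adjustDiagEntry i (β a)) l (𝓝 (K₀.adjustDiagEntry i β₀)) := by
  have hdet := (continuous_id.matrix_det.tendsto K₀).comp hK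
  have hcof := ((continuous_id.matrix_adjugate.matrix_elem i i).tendsto K₀).comp hK
  exact hK.add (((hβ.sub hdet).div hcof hK₀).smul_const _)

end Matrix

theorem tendsto_inv_mul_round_mul (c : ℝ) :
    Tendsto (fun N : ℕ => (N : ℝ)⁻¹ * round ((N : ℝ) * c)) atTop (𝓝 c) := by
  have hbound : Tendsto (fun N : ℕ => (N : ℝ)⁻¹ / 2) atTop (𝓝 0) := by
    simpa using (tendsto_inv_atTop_zero.comp tendsto_natCast_atTop_atTop).div_const (2 : ℝ)
  rw [tendsto_iff_norm_sub_tendsto_zero]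
  refine squeeze_zero_norm' ?_ hbound
  filter_upwards [eventually_ne_atTop 0] with N hN
  have hN' : (N : ℝ) ≠ 0 := Nat.cast_ne_zero.mpr hN
  rw [norm_norm, Real.norm_eq_abs, show (N : ℝ)⁻¹ * round ((N : ℝ) * c) - c
      = (N : ℝ)⁻¹ * (round ((N : ℝ) * c) - (N : ℝ) * c) by field_simp, abs_mul,
    abs_of_nonneg (by positivity), abs_sub_comm, div_eq_mul_one_div]
  exact mul_le_mul_of_nonneg_left (abs_sub_round _) (by positivity)

theorem tendsto_inv_smul_map_round_smul {m n : Type*} (X : Matrix m n ℝ) :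
    Tendsto (fun N : ℕ => (N : ℝ)⁻¹ • (((N : ℝ) • X).map round).map (Int.cast : ℤ → ℝ))
      atTop (𝓝 X) :=
  tendsto_pi_nhds.mpr fun i => tendsto_pi_nhds.mpr fun j => by
    simpa using tendsto_inv_mul_round_mul (X i j)

theorem exists_seq_tendsto_with_int_shear {ι : Type*} [Fintype ι] [DecidableEq ι] (i : ι)
    {C D : Matrix ι ι ℝ} (hC : C.det = 1) (hD : Dᵀ = -D) :
    ∃ (C' : ℕ → Matrix ι ι ℝ) (B : ℕ → Matrix ι ι ℤ), Tendsto C' atTop (𝓝 C) ∧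
      ∀ᶠ N in atTop, (C' N).det = 1 ∧
        C' N * (B N).map Int.cast - (C' N * (B N).map Int.cast)ᵀ = D := by
  let B : ℕ → Matrix ι ι ℤ := fun N => ((N : ℝ) • C⁻¹).map round
  let b : ℕ → Matrix ι ι ℝ := fun N => (N : ℝ)⁻¹ • (B N).map Int.cast
  let K : ℕ → Matrix ι ι ℝ := fun N => 1 + (2 * (N : ℝ))⁻¹ • D
  let M : ℕ → Matrix ι ι ℝ := fun N => (K N).adjustDiagEntry i (b N).det
  have hb : Tendsto b atTop (𝓝 C⁻¹) := tendsto_inv_smul_map_round_smul C⁻¹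
  have hdetb : Tendsto (fun N => (b N).det) atTop (𝓝 1) := by
    simpa [Function.comp_def, det_nonsing_inv, hC] using
      (continuous_id.matrix_det.tendsto _).comp hb
  have hK : Tendsto K atTop (𝓝 1) := by
    show Tendsto (fun N : ℕ => 1 + (2 * (N : ℝ))⁻¹ • D) atTop (𝓝 1)
    simpa using (tendsto_const_nhds (x := (1 : Matrix ι ι ℝ))).add ((tendsto_inv_atTop_zero.comp
      (tendsto_natCast_atTop_atTop.const_mul_atTop (two_pos : (0 : ℝ) < 2))).smul_const D)
  have hcof : (1 : Matrix ι ι ℝ).adjugate i i ≠ 0 := by simp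
  have hM : Tendsto M atTop (𝓝 1) := by
    have := hK.matrix_adjustDiagEntry hdetb i hcof
    rwa [← det_one (n := ι) (R := ℝ), adjustDiagEntry_det_self] at this
  refine ⟨fun N => M N * (b N)⁻¹, B, ?_, ?_⟩
  · have hC' : IsUnit C⁻¹.det := by simp [hC]
    have := hM.mul ((continuousAt_matrix_inv _
      (by simpa using continuousAt_inv₀ hC'.ne_zero)).tendsto.comp hb)
    rwa [one_mul, nonsing_inv_nonsing_inv _ (by simp [hC])] at this
  · have hcofK := ((continuous_id.matrix_adjugate.matrix_elem i i).tendsto 1).comp hK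
    filter_upwards [hdetb.eventually_ne one_ne_zero, hcofK.eventually_ne hcof,
      eventually_ne_atTop 0] with N hbN hKN hN
    have hN' : (N : ℝ) ≠ 0 := Nat.cast_ne_zero.mpr hN
    have hMdet : (M N).det = (b N).det := det_adjustDiagEntry hKN _
    have hBb : (B N).map Int.cast = (N : ℝ) • b N := by
      simp only [b, smul_smul, mul_inv_cancel₀ hN', one_smul]
    have hCB : M N * (b N)⁻¹ * (B N).map Int.cast = (N : ℝ) • M N := by
      rw [hBb, Matrix.mul_smul, nonsing_inv_mul_cancel_right _ _ (isUnit_iff_ne_zero.mpr hbN)]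
    refine ⟨?_, ?_⟩
    · rw [det_mul, det_nonsing_inv, Ring.inverse_eq_inv', hMdet, mul_inv_cancel₀ hbN]
    · rw [hCB, transpose_smul, ← smul_sub, adjustDiagEntry_sub_transpose]
      simp only [K, transpose_add, transpose_one, transpose_smul, hD]
      rw [show (N : ℝ) • (1 + (2 * (N : ℝ))⁻¹ • D - (1 + (2 * (N : ℝ))⁻¹ • -D))
          = ((N : ℝ) * (2 * (N : ℝ))⁻¹ * 2) • D by module]
      field_simp
      simp

/-- In `2n×2n` block form, with `l`, `l'` the first and last coordinate
`n`-planes: the union of the orbits, under the group `G_Λ` of integer block matrices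
`(I B; 0 A)` (`A ∈ SL(n,ℤ)`, `B ∈ M_n(ℤ)`) acting by `ω ↦ gᵀ ω g`, of the
`(l,l')`-Lagrangian split forms `(0 −Cᵀ; C 0)` (`C ∈ SL(n,ℝ)`) is dense in the set of
forms `(0 −Cᵀ; C D)` with `C ∈ SL(n,ℝ)` and `D` skew-symmetric. -/
theorem dense_GLambda_orbits_of_lagrangian_split_forms
    {n : ℕ} :
    ∀ (C : Matrix (Fin n) (Fin n) ℝ) (D : Matrix (Fin n) (Fin n) ℝ),
      C.det = 1 → Dᵀ = -D →
      Matrix.fromBlocks 0 (-Cᵀ) C D ∈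
        closure { X : Matrix (Fin n ⊕ Fin n) (Fin n ⊕ Fin n) ℝ |
          ∃ (C' : Matrix (Fin n) (Fin n) ℝ) (A B : Matrix (Fin n) (Fin n) ℤ),
            C'.det = 1 ∧ A.det = 1 ∧
            X = (Matrix.fromBlocks 1 (B.map (Int.cast : ℤ → ℝ)) 0
                    (A.map (Int.cast : ℤ → ℝ)))ᵀ *
                  Matrix.fromBlocks 0 (-C'ᵀ) C' 0 *
                  Matrix.fromBlocks 1 (B.map (Int.cast : ℤ → ℝ)) 0
                    (A.map (Int.cast : ℤ → ℝ)) } := by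
  intro C D hC hD
  cases isEmpty_or_nonempty (Fin n) with
  | inl _ =>
    exact subset_closure ⟨C, 1, 0, hC, det_one, by ext i; exact isEmptyElim i⟩
  | inr h =>
    obtain ⟨i⟩ := h
    obtain ⟨C', B, hlim, hev⟩ := exists_seq_tendsto_with_int_shear i hC hD
    have hcont : Continuous fun P : Matrix (Fin n) (Fin n) ℝ => fromBlocks 0 (-Pᵀ) P D :=
      continuous_const.matrix_fromBlocks continuous_id.matrix_transpose.neg continuous_id
        continuous_const
    refine mem_closure_of_tendsto ((hcont.tendsto C).comp hlim) ?_
    filter_upwards [hev] with N ⟨hdet, hskew⟩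
    refine ⟨C' N, 1, B N, hdet, det_one, ?_⟩
    rw [Matrix.map_one _ Int.cast_zero Int.cast_one, transpose_shear_mul_fromBlocks_mul_shear,
      hskew]
    rfl
end
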